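/- arXiv:2410.03833 — 2 statements merged into one kernel-verified Lean document; each statement's English description precedes it below -/
import Mathlib

section
/- Theorem 4.1, overlapping-features scenario, Option B (discarding overlapping features): the regularized fine-tuned model ŵ'_t satisfies L(ŵ'_t, D_r) = ‖(I − P_t) w_*^lap‖²_{(1/n_r)·X_r X_rᵀ} and L(ŵ'_t, D_f) = ‖P w_*^r + P_t w_*^lap − (w_*^f + w_*^lap)‖²_{(1/n_f)·X_f X_fᵀ}; in particular discarding the overlapping features makes the remaining loss nonzero in general. -/
/-!
With `P = X (XᵀX)⁻¹ Xᵀ` one has `XᵀP = Xᵀ`, hence `AᵀP = Aᵀ` for every `A = XB`. Both `X_r` and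
`X_t = X_r S` are of this form, so `X_rᵀP = X_rᵀ` and `P_t P = P_t`; the latter collapses the
regularized model to `ŵ'_t = P w_*^r + P_t w_*^lap`. The block structure gives `X_rᵀ w_*^f = 0`
and `X_fᵀ w_*^r = 0`, so the residuals are `-X_rᵀ (I - P_t) w_*^lap` and
`X_fᵀ (P w_*^r + P_t w_*^lap - w_*^f - w_*^lap)`, and `‖Aᵀv‖² = vᵀ A Aᵀ v` finishes.
-/

open Matrix

namespace Matrix

variable {R : Type*} {k m n : Type*} [Fintype m] [Fintype n]

section colSpanProj

variable [CommRing R] [DecidableEq n]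

noncomputable def colSpanProj (X : Matrix m n R) : Matrix m m R := X * (Xᵀ * X)⁻¹ * Xᵀ

theorem transpose_mul_colSpanProj {X : Matrix m n R} (hX : IsUnit (Xᵀ * X)) :
    Xᵀ * colSpanProj X = Xᵀ := by
  rw [colSpanProj, ← Matrix.mul_assoc, ← Matrix.mul_assoc,
    mul_nonsing_inv _ ((isUnit_iff_isUnit_det _).mp hX), Matrix.one_mul]

theorem transpose_mul_colSpanProj_of_eq_mul [Fintype k] {X : Matrix m n R} {A : Matrix m k R}
    (hX : IsUnit (Xᵀ * X)) {B : Matrix n k R} (hA : A = X * B) :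
    Aᵀ * colSpanProj X = Aᵀ := by
  rw [hA, transpose_mul, Matrix.mul_assoc, transpose_mul_colSpanProj hX]

theorem colSpanProj_mul_colSpanProj_of_eq_mul [Fintype k] [DecidableEq k] {X : Matrix m n R}
    {A : Matrix m k R} (hX : IsUnit (Xᵀ * X)) {B : Matrix n k R} (hA : A = X * B) :
    colSpanProj A * colSpanProj X = colSpanProj A := by
  unfold colSpanProj
  rw [Matrix.mul_assoc _ Aᵀ, ← colSpanProj, transpose_mul_colSpanProj_of_eq_mul hX hA]

end colSpanProj

theorem fromCols_mul_fromRows_one_zero [Semiring R] [DecidableEq m] (A : Matrix k m R)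
    (B : Matrix k n R) : fromCols A B * fromRows (1 : Matrix m m R) (0 : Matrix n m R) = A := by
  rw [fromCols_mul_fromRows, Matrix.mul_one, Matrix.mul_zero, add_zero]

theorem one_sub_mulVec_mulVec_add_mulVec_add [Ring R] [DecidableEq m] {P Q : Matrix m m R}
    (hQP : Q * P = Q) (u v : m → R) :
    (1 - Q) *ᵥ (P *ᵥ u) + Q *ᵥ (u + v) = P *ᵥ u + Q *ᵥ v := by
  rw [mulVec_mulVec, sub_mul, Matrix.one_mul, hQP, sub_mulVec, mulVec_add]
  abel

theorem transpose_mulVec_dotProduct_self [CommSemiring R] (A : Matrix m n R) (v : m → R) :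
    (Aᵀ *ᵥ v) ⬝ᵥ (Aᵀ *ᵥ v) = v ⬝ᵥ ((A * Aᵀ) *ᵥ v) := by
  rw [← mulVec_mulVec, dotProduct_mulVec v A, mulVec_transpose]

end Matrix

theorem regularized_optionB_overlap_general
    (d_r d_lap d_f n_r n_f n_t : ℕ)
    (R : Matrix (Fin d_r) (Fin n_r) ℝ) (L1 : Matrix (Fin d_lap) (Fin n_r) ℝ)
    (L2 : Matrix (Fin d_lap) (Fin n_f) ℝ) (F : Matrix (Fin d_f) (Fin n_f) ℝ)
    (X_r : Matrix (Fin d_r ⊕ (Fin d_lap ⊕ Fin d_f)) (Fin n_r) ℝ)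
    (hXr : X_r = Matrix.fromRows R (Matrix.fromRows L1 0))
    (X_f : Matrix (Fin d_r ⊕ (Fin d_lap ⊕ Fin d_f)) (Fin n_f) ℝ)
    (hXf : X_f = Matrix.fromRows 0 (Matrix.fromRows L2 F))
    (X : Matrix (Fin d_r ⊕ (Fin d_lap ⊕ Fin d_f)) (Fin n_r ⊕ Fin n_f) ℝ)
    (hX : X = Matrix.fromCols X_r X_f)
    (hXinv : IsUnit (Xᵀ * X))
    (wr wl wf : Fin d_r ⊕ (Fin d_lap ⊕ Fin d_f) → ℝ)
    (hwr : ∀ i, wr (Sum.inr i) = 0)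
    (hwf1 : ∀ i, wf (Sum.inl i) = 0) (hwf2 : ∀ i, wf (Sum.inr (Sum.inl i)) = 0)
    (wstar : Fin d_r ⊕ (Fin d_lap ⊕ Fin d_f) → ℝ) (hws : wstar = wr + wl + wf)
    (y_r : Fin n_r → ℝ) (hyr : y_r = X_rᵀ *ᵥ wstar)
    (y_f : Fin n_f → ℝ) (hyf : y_f = X_fᵀ *ᵥ wstar)
    (S : Matrix (Fin n_r) (Fin n_t) ℝ)
    (X_t : Matrix (Fin d_r ⊕ (Fin d_lap ⊕ Fin d_f)) (Fin n_t) ℝ) (hXt : X_t = X_r * S)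
    (P P_t : Matrix (Fin d_r ⊕ (Fin d_lap ⊕ Fin d_f)) (Fin d_r ⊕ (Fin d_lap ⊕ Fin d_f)) ℝ)
    (hP : P = X * (Xᵀ * X)⁻¹ * Xᵀ)
    (hPt : P_t = X_t * (X_tᵀ * X_t)⁻¹ * X_tᵀ)
    (hatw_o hatw_t : Fin d_r ⊕ (Fin d_lap ⊕ Fin d_f) → ℝ)
    (hhato : hatw_o = P *ᵥ wr)
    (hhatt : hatw_t = (1 - P_t) *ᵥ hatw_o + P_t *ᵥ (wr + wl)) :
    (1 / (n_r : ℝ)) * ((X_rᵀ *ᵥ hatw_t - y_r) ⬝ᵥ (X_rᵀ *ᵥ hatw_t - y_r)) =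
        (1 / (n_r : ℝ)) *
          (((1 - P_t) *ᵥ wl) ⬝ᵥ ((X_r * X_rᵀ) *ᵥ ((1 - P_t) *ᵥ wl))) ∧
      (1 / (n_f : ℝ)) * ((X_fᵀ *ᵥ hatw_t - y_f) ⬝ᵥ (X_fᵀ *ᵥ hatw_t - y_f)) =
        (1 / (n_f : ℝ)) *
          ((P *ᵥ wr + P_t *ᵥ wl - (wf + wl)) ⬝ᵥ
            ((X_f * X_fᵀ) *ᵥ (P *ᵥ wr + P_t *ᵥ wl - (wf + wl)))) := by
  obtain ⟨E, hXr_X⟩ : ∃ E, X_r = X * E :=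
    ⟨_, hX ▸ (fromCols_mul_fromRows_one_zero X_r X_f).symm⟩
  have hXt_X : X_t = X * (E * S) := by rw [hXt, hXr_X, Matrix.mul_assoc]
  have hXrP : X_rᵀ * P = X_rᵀ := hP ▸ transpose_mul_colSpanProj_of_eq_mul hXinv hXr_X
  have hPtP : P_t * P = P_t := hP ▸ hPt ▸ colSpanProj_mul_colSpanProj_of_eq_mul hXinv hXt_X
  have hw_t : hatw_t = P *ᵥ wr + P_t *ᵥ wl := by
    rw [hhatt, hhato, one_sub_mulVec_mulVec_add_mulVec_add hPtP]
  have hXr_wf : X_rᵀ *ᵥ wf = 0 := by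
    simp [mulVec_transpose, hXr, Function.comp_def, hwf1, hwf2, ← Pi.zero_def]
  have hXf_wr : X_fᵀ *ᵥ wr = 0 := by
    simp [mulVec_transpose, hXf, Function.comp_def, hwr, ← Pi.zero_def]
  have hres_r : X_rᵀ *ᵥ hatw_t - y_r = -(X_rᵀ *ᵥ ((1 - P_t) *ᵥ wl)) := by
    rw [hw_t, hyr, hws, sub_mulVec, one_mulVec]
    simp only [mulVec_add, mulVec_sub, mulVec_mulVec, hXrP, hXr_wf]
    abel
  have hres_f : X_fᵀ *ᵥ hatw_t - y_f = X_fᵀ *ᵥ (P *ᵥ wr + P_t *ᵥ wl - (wf + wl)) := by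
    rw [hw_t, hyf, hws]
    simp only [mulVec_add, mulVec_sub, hXf_wr]
    abel
  constructor
  · rw [hres_r, neg_dotProduct, dotProduct_neg, neg_neg, transpose_mulVec_dotProduct_self]
  · rw [hres_f, transpose_mulVec_dotProduct_self]

/-- regularized_optionB_overlap -/
theorem regularized_optionB_overlap
    (d_r d_lap d_f n_r n_f n_t : ℕ)
    (hd_r : 0 < d_r) (hd_lap : 0 < d_lap) (hd_f : 0 < d_f)
    (hn_r : 0 < n_r) (hn_f : 0 < n_f) (hn_t : 0 < n_t)
    (R : Matrix (Fin d_r) (Fin n_r) ℝ) (L1 : Matrix (Fin d_lap) (Fin n_r) ℝ)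
    (L2 : Matrix (Fin d_lap) (Fin n_f) ℝ) (F : Matrix (Fin d_f) (Fin n_f) ℝ)
    (X_r : Matrix (Fin d_r ⊕ (Fin d_lap ⊕ Fin d_f)) (Fin n_r) ℝ)
    (hXr : X_r = Matrix.fromRows R (Matrix.fromRows L1 0))
    (X_f : Matrix (Fin d_r ⊕ (Fin d_lap ⊕ Fin d_f)) (Fin n_f) ℝ)
    (hXf : X_f = Matrix.fromRows 0 (Matrix.fromRows L2 F))
    (X : Matrix (Fin d_r ⊕ (Fin d_lap ⊕ Fin d_f)) (Fin n_r ⊕ Fin n_f) ℝ)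
    (hX : X = Matrix.fromCols X_r X_f)
    (hXinv : IsUnit (Xᵀ * X)) (hXrinv : IsUnit (X_rᵀ * X_r)) (hXfinv : IsUnit (X_fᵀ * X_f))
    (wr wl wf : Fin d_r ⊕ (Fin d_lap ⊕ Fin d_f) → ℝ)
    (hwr : ∀ i, wr (Sum.inr i) = 0)
    (hwl1 : ∀ i, wl (Sum.inl i) = 0) (hwl2 : ∀ i, wl (Sum.inr (Sum.inr i)) = 0)
    (hwf1 : ∀ i, wf (Sum.inl i) = 0) (hwf2 : ∀ i, wf (Sum.inr (Sum.inl i)) = 0)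
    (wstar : Fin d_r ⊕ (Fin d_lap ⊕ Fin d_f) → ℝ) (hws : wstar = wr + wl + wf)
    (y_r : Fin n_r → ℝ) (hyr : y_r = X_rᵀ *ᵥ wstar)
    (y_f : Fin n_f → ℝ) (hyf : y_f = X_fᵀ *ᵥ wstar)
    (S : Matrix (Fin n_r) (Fin n_t) ℝ)
    (X_t : Matrix (Fin d_r ⊕ (Fin d_lap ⊕ Fin d_f)) (Fin n_t) ℝ) (hXt : X_t = X_r * S)
    (hXtinv : IsUnit (X_tᵀ * X_t))
    (P P_r P_t : Matrix (Fin d_r ⊕ (Fin d_lap ⊕ Fin d_f)) (Fin d_r ⊕ (Fin d_lap ⊕ Fin d_f)) ℝ)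
    (hP : P = X * (Xᵀ * X)⁻¹ * Xᵀ)
    (hPr : P_r = X_r * (X_rᵀ * X_r)⁻¹ * X_rᵀ)
    (hPt : P_t = X_t * (X_tᵀ * X_t)⁻¹ * X_tᵀ)
    (hatw_o hatw_t : Fin d_r ⊕ (Fin d_lap ⊕ Fin d_f) → ℝ)
    (hhato : hatw_o = P *ᵥ wr)
    (hhatt : hatw_t = (1 - P_t) *ᵥ hatw_o + P_t *ᵥ (wr + wl)) :
    (1 / (n_r : ℝ)) * ((X_rᵀ *ᵥ hatw_t - y_r) ⬝ᵥ (X_rᵀ *ᵥ hatw_t - y_r)) =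
        (1 / (n_r : ℝ)) *
          (((1 - P_t) *ᵥ wl) ⬝ᵥ ((X_r * X_rᵀ) *ᵥ ((1 - P_t) *ᵥ wl))) ∧
      (1 / (n_f : ℝ)) * ((X_fᵀ *ᵥ hatw_t - y_f) ⬝ᵥ (X_fᵀ *ᵥ hatw_t - y_f)) =
        (1 / (n_f : ℝ)) *
          ((P *ᵥ wr + P_t *ᵥ wl - (wf + wl)) ⬝ᵥ
            ((X_f * X_fᵀ) *ᵥ (P *ᵥ wr + P_t *ᵥ wl - (wf + wl)))) :=
  regularized_optionB_overlap_general d_r d_lap d_f n_r n_f n_t R L1 L2 F X_r hXr X_f hXf X hX hXinv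
    wr wl wf hwr hwf1 hwf2 wstar hws y_r hyr y_f hyf S X_t hXt P P_t hP hPt hatw_o hatw_t hhato
    hhatt
end

section
/- Truncation of the pretrained model under distinct features: the vector ŵ_o obtained from the pretrained model w_o = P w_* by setting its last d_f coordinates to zero (keeping its first d_r coordinates) equals P w_*^r = P_r w_*^r; in particular, ŵ_o coincides with the golden model w_g. -/
/-!
With distinct features the data matrix is block diagonal, `X = diag(R, F)`, hence so is its Gram
matrix, and `P = diag(P_R, P_F)` while `P_r = diag(P_R, 0)`, where `P_M = M (MᵀM)⁻¹ Mᵀ`. The top block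
of `w_o = P w_*` is therefore `P_R` applied to the top block `u` of `w_*`, which is also the top block
of `w_*^r`; since `w_*^r` vanishes on the bottom block, `P w_*^r = P_r w_*^r = (P_R u, 0)`.
-/

open Matrix

namespace Matrix

variable {α : Type*} [CommRing α] {m₁ m₂ n₁ n₂ : Type*}
  [Fintype m₁] [Fintype m₂] [Fintype n₁] [Fintype n₂]
  [DecidableEq n₁] [DecidableEq n₂]

/-- Over `ℝ` and with `XᵀX` invertible, the orthogonal projection onto the column space of `X`. -/
noncomputable def colProj {m n : Type*} [Fintype m] [Fintype n] [DecidableEq n]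
    (X : Matrix m n α) : Matrix m m α :=
  X * (Xᵀ * X)⁻¹ * Xᵀ

theorem colProj_fromRows_zero (A : Matrix m₁ n₁ α) :
    colProj (fromRows A (0 : Matrix m₂ n₁ α)) = fromBlocks (colProj A) 0 0 0 := by
  simp only [colProj, transpose_fromRows, transpose_zero, fromCols_mul_fromRows, Matrix.zero_mul,
    add_zero, fromRows_mul, mul_fromCols, Matrix.mul_zero, Matrix.zero_mul]
  rw [← fromRows_zero, fromCols_fromRows_eq_fromBlocks]

theorem colProj_fromBlocks_zero₁₂_zero₂₁ (A : Matrix m₁ n₁ α) (D : Matrix m₂ n₂ α)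
    (hA : IsUnit (Aᵀ * A)) (hD : IsUnit (Dᵀ * D)) :
    colProj (fromBlocks A 0 0 D) = fromBlocks (colProj A) 0 0 (colProj D) := by
  have hgram : (fromBlocks A 0 0 D)ᵀ * fromBlocks A 0 0 D = fromBlocks (Aᵀ * A) 0 0 (Dᵀ * D) := by
    simp [fromBlocks_transpose, fromBlocks_multiply]
  rw [colProj, hgram, inv_fromBlocks_zero₂₁_of_isUnit_iff _ _ _ (iff_of_true hA hD)]
  simp [colProj, fromBlocks_transpose, fromBlocks_multiply, Matrix.mul_assoc]

end Matrix

theorem truncated_pretrained_equals_golden_distinct_general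
    (d_r d_f n_r n_f : ℕ)
    (R : Matrix (Fin d_r) (Fin n_r) ℝ) (F : Matrix (Fin d_f) (Fin n_f) ℝ)
    (hR : IsUnit (Rᵀ * R)) (hF : IsUnit (Fᵀ * F))
    (X_r : Matrix (Fin d_r ⊕ Fin d_f) (Fin n_r) ℝ) (hXr : X_r = Matrix.fromRows R 0)
    (X_f : Matrix (Fin d_r ⊕ Fin d_f) (Fin n_f) ℝ) (hXf : X_f = Matrix.fromRows 0 F)
    (X : Matrix (Fin d_r ⊕ Fin d_f) (Fin n_r ⊕ Fin n_f) ℝ) (hX : X = Matrix.fromCols X_r X_f)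
    (wr wf : Fin d_r ⊕ Fin d_f → ℝ)
    (hwr : ∀ i, wr (Sum.inr i) = 0) (hwf : ∀ i, wf (Sum.inl i) = 0)
    (wstar : Fin d_r ⊕ Fin d_f → ℝ) (hws : wstar = wr + wf)
    (P P_r : Matrix (Fin d_r ⊕ Fin d_f) (Fin d_r ⊕ Fin d_f) ℝ)
    (hP : P = X * (Xᵀ * X)⁻¹ * Xᵀ)
    (hPr : P_r = X_r * (X_rᵀ * X_r)⁻¹ * X_rᵀ)
    (w_o w_g : Fin d_r ⊕ Fin d_f → ℝ)
    (hwo : w_o = P *ᵥ wstar)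
    (hwg : w_g = P_r *ᵥ wr)
    (hatw_o : Fin d_r ⊕ Fin d_f → ℝ)
    (hhato1 : ∀ i, hatw_o (Sum.inl i) = w_o (Sum.inl i))
    (hhato2 : ∀ i, hatw_o (Sum.inr i) = 0) :
    hatw_o = P *ᵥ wr ∧ hatw_o = P_r *ᵥ wr ∧ hatw_o = w_g := by
  have hP_blocks : P = fromBlocks (colProj R) 0 0 (colProj F) := by
    rw [hP, hX, hXr, hXf, fromCols_fromRows_eq_fromBlocks]
    exact colProj_fromBlocks_zero₁₂_zero₂₁ R F hR hF
  have hPr_blocks : P_r = fromBlocks (colProj R) 0 0 0 := by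
    rw [hPr, hXr]
    exact colProj_fromRows_zero R
  have hwr_inr : wr ∘ Sum.inr = 0 := funext hwr
  have hwf_inl : wf ∘ Sum.inl = 0 := funext hwf
  have hPwr : P *ᵥ wr = P_r *ᵥ wr := by
    rw [hP_blocks, hPr_blocks, fromBlocks_mulVec, fromBlocks_mulVec, hwr_inr]
    simp
  have htrunc : hatw_o = P_r *ᵥ wr := by
    ext (i | i)
    · rw [hhato1, hwo, hws, ← hPwr, hP_blocks, mulVec_add, fromBlocks_mulVec, fromBlocks_mulVec]
      simp [hwr_inr, hwf_inl]
    · rw [hhato2, hPr_blocks, fromBlocks_mulVec]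
      simp
  exact ⟨htrunc.trans hPwr.symm, htrunc, htrunc.trans hwg.symm⟩

/-- truncated_pretrained_equals_golden_distinct -/
theorem truncated_pretrained_equals_golden_distinct
    (d_r d_f n_r n_f n_t : ℕ)
    (hd_r : 0 < d_r) (hd_f : 0 < d_f) (hn_r : 0 < n_r) (hn_f : 0 < n_f) (hn_t : 0 < n_t)
    (R : Matrix (Fin d_r) (Fin n_r) ℝ) (F : Matrix (Fin d_f) (Fin n_f) ℝ)
    (hR : IsUnit (Rᵀ * R)) (hF : IsUnit (Fᵀ * F))
    (X_r : Matrix (Fin d_r ⊕ Fin d_f) (Fin n_r) ℝ) (hXr : X_r = Matrix.fromRows R 0)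
    (X_f : Matrix (Fin d_r ⊕ Fin d_f) (Fin n_f) ℝ) (hXf : X_f = Matrix.fromRows 0 F)
    (X : Matrix (Fin d_r ⊕ Fin d_f) (Fin n_r ⊕ Fin n_f) ℝ) (hX : X = Matrix.fromCols X_r X_f)
    (hXinv : IsUnit (Xᵀ * X))
    (wr wf : Fin d_r ⊕ Fin d_f → ℝ)
    (hwr : ∀ i, wr (Sum.inr i) = 0) (hwf : ∀ i, wf (Sum.inl i) = 0)
    (wstar : Fin d_r ⊕ Fin d_f → ℝ) (hws : wstar = wr + wf)
    (y_r : Fin n_r → ℝ) (hyr : y_r = X_rᵀ *ᵥ wstar)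
    (y_f : Fin n_f → ℝ) (hyf : y_f = X_fᵀ *ᵥ wstar)
    (S : Matrix (Fin n_r) (Fin n_t) ℝ)
    (X_t : Matrix (Fin d_r ⊕ Fin d_f) (Fin n_t) ℝ) (hXt : X_t = X_r * S)
    (hXtinv : IsUnit (X_tᵀ * X_t))
    (P P_r P_t : Matrix (Fin d_r ⊕ Fin d_f) (Fin d_r ⊕ Fin d_f) ℝ)
    (hP : P = X * (Xᵀ * X)⁻¹ * Xᵀ)
    (hPr : P_r = X_r * (X_rᵀ * X_r)⁻¹ * X_rᵀ)
    (hPt : P_t = X_t * (X_tᵀ * X_t)⁻¹ * X_tᵀ)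
    (w_o w_t w_g : Fin d_r ⊕ Fin d_f → ℝ)
    (hwo : w_o = P *ᵥ wstar)
    (hwt : w_t = (1 - P_t) *ᵥ w_o + P_t *ᵥ wr)
    (hwg : w_g = P_r *ᵥ wr)
    (hatw_o : Fin d_r ⊕ Fin d_f → ℝ)
    (hhato1 : ∀ i, hatw_o (Sum.inl i) = w_o (Sum.inl i))
    (hhato2 : ∀ i, hatw_o (Sum.inr i) = 0) :
    hatw_o = P *ᵥ wr ∧ hatw_o = P_r *ᵥ wr ∧ hatw_o = w_g :=
  truncated_pretrained_equals_golden_distinct_general d_r d_f n_r n_f R F hR hF X_r hXr X_f hXf X hX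
    wr wf hwr hwf wstar hws P P_r hP hPr w_o w_g hwo hwg hatw_o hhato1 hhato2
end
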